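/- Let g be a finite-dimensional real Lie algebra, h: g* × ℝ → ℝ smooth, and let (μ(t), z(t)) be a curve in g* × ℝ satisfying μ'(t) = ad*_{δh/δμ} μ - μ ∂h/∂z and z'(t) = ⟨μ, δh/δμ⟩ - h(μ,z). Then for every smooth f: g* × ℝ → ℝ, d/dt f(μ(t),z(t)) = {h,f}(μ(t),z(t)) - f(μ(t),z(t)) · ∂h/∂z(μ(t),z(t)), where {·,·} is the Lie-Poisson-Jacobi bracket. -/

import Mathlib

/- `g` is a finite-dimensional real Lie algebra: a finite-dimensional real vector
space together with a bilinear bracket `B` which is alternating and satisfies the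
Jacobi identity (these two conditions appear as hypotheses of the theorems below).
Its dual g* is realized as the continuous dual g →L[ℝ] ℝ. -/
variable {g : Type*} [NormedAddCommGroup g] [NormedSpace ℝ g] [FiniteDimensional ℝ g]

/-- The functional derivative δf/δμ ∈ g of f : g* × ℝ → ℝ with respect to μ ∈ g*,
characterized by Df(μ,z)·(ν,0) = ⟨ν, δf/δμ⟩ for all ν ∈ g*.  (Since g is finite
dimensional, the evaluation pairing identifies g with the dual of g*.) -/
noncomputable def deltaMu (f : (g →L[ℝ] ℝ) × ℝ → ℝ) (p : (g →L[ℝ] ℝ) × ℝ) : g :=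
  (Module.evalEquiv ℝ g).symm <|
    (((fderiv ℝ f p).comp (ContinuousLinearMap.inl ℝ (g →L[ℝ] ℝ) ℝ)).toLinearMap).comp
      ((LinearMap.toContinuousLinearMap :
        (g →ₗ[ℝ] ℝ) ≃ₗ[ℝ] (g →L[ℝ] ℝ)).toLinearMap)

/-- The partial derivative ∂f/∂z of f : g* × ℝ → ℝ in the ℝ-variable. -/
noncomputable def deltaZ (f : (g →L[ℝ] ℝ) × ℝ → ℝ) (p : (g →L[ℝ] ℝ) × ℝ) : ℝ :=
  fderiv ℝ f p (0, 1)

/-- The Lie-Poisson-Jacobi bracket on g* × ℝ (B is the Lie bracket of g):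
{f,k}(μ,z) = ⟨μ,[δf/δμ, δk/δμ]⟩ + ⟨μ,δf/δμ⟩ ∂k/∂z - ⟨μ,δk/δμ⟩ ∂f/∂z
             - f ∂k/∂z + k ∂f/∂z. -/
noncomputable def LPJBracket (B : g →ₗ[ℝ] g →ₗ[ℝ] g)
    (f k : (g →L[ℝ] ℝ) × ℝ → ℝ) (p : (g →L[ℝ] ℝ) × ℝ) : ℝ :=
  p.1 (B (deltaMu f p) (deltaMu k p)) + p.1 (deltaMu f p) * deltaZ k p
    - p.1 (deltaMu k p) * deltaZ f p - f p * deltaZ k p + k p * deltaZ f p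

/-- The coadjoint operator ad*_ξ : g* → g*, ⟨ad*_ξ μ, η⟩ = ⟨μ, [ξ, η]⟩,
where B is the Lie bracket of g. -/
noncomputable def coad (B : g →ₗ[ℝ] g →ₗ[ℝ] g) (ξ : g) (μ : g →L[ℝ] ℝ) :
    g →L[ℝ] ℝ :=
  μ.comp (LinearMap.toContinuousLinearMap (B ξ))

/-- Along any solution of the Lie-Poisson-Jacobi equations
μ' = ad*_{δh/δμ} μ - μ ∂h/∂z, z' = ⟨μ, δh/δμ⟩ - h(μ,z), every smooth function
f on g* × ℝ evolves by df/dt = {h,f} - f·∂h/∂z. -/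

lemma fderiv_inl_eq (f : (g →L[ℝ] ℝ) × ℝ → ℝ) (p : (g →L[ℝ] ℝ) × ℝ)
    (ν : g →L[ℝ] ℝ) : fderiv ℝ f p (ν, 0) = ν (deltaMu f p) := by
  have h3 : (LinearMap.toContinuousLinearMap (ν.toLinearMap) : g →L[ℝ] ℝ) = ν := by
    ext x; simp
  calc fderiv ℝ f p (ν, 0)
      = ((((fderiv ℝ f p).comp (ContinuousLinearMap.inl ℝ (g →L[ℝ] ℝ) ℝ)).toLinearMap).comp
          ((LinearMap.toContinuousLinearMap :
            (g →ₗ[ℝ] ℝ) ≃ₗ[ℝ] (g →L[ℝ] ℝ)).toLinearMap)) ν.toLinearMap := by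
        simp only [LinearMap.comp_apply, LinearEquiv.coe_coe, h3,
          ContinuousLinearMap.coe_coe, ContinuousLinearMap.comp_apply,
          ContinuousLinearMap.inl_apply]
    _ = (Module.evalEquiv ℝ g (deltaMu f p)) ν.toLinearMap := by
        rw [deltaMu, LinearEquiv.apply_symm_apply]
    _ = ν (deltaMu f p) := rfl

lemma fderiv_pair_eq (f : (g →L[ℝ] ℝ) × ℝ → ℝ) (p : (g →L[ℝ] ℝ) × ℝ)
    (ν : g →L[ℝ] ℝ) (a : ℝ) :
    fderiv ℝ f p (ν, a) = ν (deltaMu f p) + a * deltaZ f p := by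
  have : (ν, a) = (ν, (0:ℝ)) + a • ((0 : g →L[ℝ] ℝ), (1:ℝ)) := by
    simp [Prod.ext_iff]
  rw [this, map_add, map_smul, fderiv_inl_eq, deltaZ]
  simp [smul_eq_mul]

theorem LPJ_evolution
    (B : g →ₗ[ℝ] g →ₗ[ℝ] g) (hBalt : ∀ x : g, B x x = 0)
    (hBjac : ∀ x y z : g, B x (B y z) + B y (B z x) + B z (B x y) = 0)
    (h f : (g →L[ℝ] ℝ) × ℝ → ℝ)
    (hh : ContDiff ℝ (⊤ : ℕ∞) h) (hf : ContDiff ℝ (⊤ : ℕ∞) f)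
    (μ : ℝ → g →L[ℝ] ℝ) (z : ℝ → ℝ)
    (hμ : ∀ t, HasDerivAt μ
      (coad B (deltaMu h (μ t, z t)) (μ t) - deltaZ h (μ t, z t) • μ t) t)
    (hz : ∀ t, HasDerivAt z ((μ t) (deltaMu h (μ t, z t)) - h (μ t, z t)) t) :
    ∀ t, HasDerivAt (fun s => f (μ s, z s))
      (LPJBracket B h f (μ t, z t) - f (μ t, z t) * deltaZ h (μ t, z t)) t := by
  intro t
  have hfd : HasFDerivAt f (fderiv ℝ f (μ t, z t)) (μ t, z t) :=
    (hf.differentiable (by simp) (μ t, z t)).hasFDerivAt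
  have hpair : HasDerivAt (fun s => (μ s, z s))
      ((coad B (deltaMu h (μ t, z t)) (μ t) - deltaZ h (μ t, z t) • μ t,
        (μ t) (deltaMu h (μ t, z t)) - h (μ t, z t))) t := (hμ t).prodMk (hz t)
  have := hfd.comp_hasDerivAt t hpair
  refine this.congr_deriv ?_
  rw [fderiv_pair_eq]
  simp only [ContinuousLinearMap.sub_apply, ContinuousLinearMap.smul_apply, coad,
    ContinuousLinearMap.comp_apply, LinearMap.coe_toContinuousLinearMap', smul_eq_mul]
  unfold LPJBracket
  ring
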